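/- The von Neumann entropy of a density matrix M (i.e., −∑_k λ_k log λ_k where λ_k are eigenvalues of the positive semidefinite Hermitian matrix M with trace 1) is at most the sum over all entries of −|m_{ij}| log |m_{ij}| (entrywise Shannon entropy), with the convention 0 log 0 = 0. -/

import Mathlib

/-!
Write `M = U diag(λ) U*` with `U` unitary. The diagonal of `M` is then `W λ`, where
`W i k = |U i k|²` is doubly stochastic, so Jensen's inequality for the concave function
`x ↦ -x log x`, applied row by row and summed, shows that the entropy of the spectrum is at
most that of the diagonal. Every entry of `M` has modulus at most `tr M = 1`, so each
off-diagonal term `-|m_ij| log |m_ij|` is nonnegative, and adding them only increases the sum.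
-/

open ComplexOrder

open Finset Matrix

theorem ConcaveOn.sum_map_le_sum_map_mulVec {𝕜 β ι : Type*} [Field 𝕜] [LinearOrder 𝕜]
    [IsStrictOrderedRing 𝕜] [AddCommGroup β] [PartialOrder β] [IsOrderedAddMonoid β]
    [Module 𝕜 β] [IsStrictOrderedModule 𝕜 β] [Fintype ι] [DecidableEq ι]
    {s : Set 𝕜} {f : 𝕜 → β} (hf : ConcaveOn 𝕜 s f) {B : Matrix ι ι 𝕜}
    (hB : B ∈ doublyStochastic 𝕜 ι) {x : ι → 𝕜} (hx : ∀ i, x i ∈ s) :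
    ∑ i, f (x i) ≤ ∑ i, f ((B *ᵥ x) i) := by
  obtain ⟨hB_nonneg, hB_row, hB_col⟩ := mem_doublyStochastic_iff_sum.mp hB
  calc ∑ j, f (x j) = ∑ i, ∑ j, B i j • f (x j) := by
        rw [sum_comm]
        simp only [← sum_smul, hB_col, one_smul]
    _ ≤ ∑ i, f (∑ j, B i j • x j) := by
        gcongr with i
        exact hf.le_map_sum (fun j _ => hB_nonneg i j) (hB_row i) fun j _ => hx j
    _ = ∑ i, f ((B *ᵥ x) i) := by simp [mulVec, dotProduct]

namespace Matrix

variable {𝕜 n : Type*} [RCLike 𝕜]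

theorem PosSemidef.norm_apply_self {A : Matrix n n 𝕜} (hA : A.PosSemidef) (i : n) :
    ‖A i i‖ = RCLike.re (A i i) := by
  simpa using congrArg RCLike.re (RCLike.norm_of_nonneg' hA.diag_nonneg)

variable [Fintype n] [DecidableEq n]

theorem map_norm_sq_mem_doublyStochastic {U : Matrix n n 𝕜} (hU : U ∈ unitaryGroup n 𝕜) :
    U.map (‖·‖ ^ 2) ∈ doublyStochastic ℝ n := by
  have hrow (i : n) : ∑ j, ‖U i j‖ ^ 2 = 1 := by
    have h := congr_fun₂ (mem_unitaryGroup_iff.mp hU) i i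
    simp only [mul_apply, star_apply, RCLike.star_def, RCLike.mul_conj, one_apply_eq] at h
    exact_mod_cast h
  have hcol (j : n) : ∑ i, ‖U i j‖ ^ 2 = 1 := by
    have h := congr_fun₂ (mem_unitaryGroup_iff'.mp hU) j j
    simp only [mul_apply, star_apply, RCLike.star_def, RCLike.conj_mul, one_apply_eq] at h
    exact_mod_cast h
  exact mem_doublyStochastic_iff_sum.mpr ⟨fun i j => sq_nonneg _, hrow, hcol⟩

namespace IsHermitian

variable {A : Matrix n n 𝕜} (hA : A.IsHermitian)

theorem apply_eq_sum_eigenvalues (i j : n) :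
    A i j = ∑ k, (hA.eigenvectorUnitary : Matrix n n 𝕜) i k * hA.eigenvalues k *
      star ((hA.eigenvectorUnitary : Matrix n n 𝕜) j k) := by
  conv_lhs => rw [hA.spectral_theorem]
  simp [mul_apply, diagonal_apply, star_apply]

theorem re_apply_self_eq_mulVec_eigenvalues (i : n) :
    RCLike.re (A i i) =
      ((hA.eigenvectorUnitary : Matrix n n 𝕜).map (‖·‖ ^ 2) *ᵥ hA.eigenvalues) i := by
  rw [hA.apply_eq_sum_eigenvalues]
  simp [mulVec, dotProduct, mul_right_comm _ (_ : 𝕜), RCLike.mul_conj]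

end IsHermitian

theorem PosSemidef.norm_apply_le_re_trace {A : Matrix n n 𝕜} (hA : A.PosSemidef) (i j : n) :
    ‖A i j‖ ≤ RCLike.re A.trace := by
  have hU := hA.1.eigenvectorUnitary.2
  rw [hA.1.apply_eq_sum_eigenvalues, hA.1.trace_eq_sum_eigenvalues, map_sum]
  refine (norm_sum_le _ _).trans (sum_le_sum fun k _ => ?_)
  have heig := hA.eigenvalues_nonneg k
  rw [norm_mul, norm_mul, norm_star, RCLike.norm_ofReal, abs_of_nonneg heig, RCLike.ofReal_re]
  calc _ ≤ 1 * hA.1.eigenvalues k * 1 := by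
        gcongr
        exacts [entry_norm_bound_of_unitary hU i k, entry_norm_bound_of_unitary hU j k]
    _ = _ := by ring

end Matrix

theorem vonNeumann_entropy_le_entrywise_entropy {n : ℕ}
    (M : Matrix (Fin n) (Fin n) ℂ) (hM : M.PosSemidef) (htr : M.trace = 1) :
    -∑ k, (hM.1.eigenvalues k * Real.log (hM.1.eigenvalues k)) ≤
      ∑ i, ∑ j, -(‖M i j‖ * Real.log ‖M i j‖) := by
  have hentry_le_one (i j : Fin n) : ‖M i j‖ ≤ 1 := by
    simpa [htr] using hM.norm_apply_le_re_trace i j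
  suffices ∑ k, Real.negMulLog (hM.1.eigenvalues k) ≤ ∑ i, ∑ j, Real.negMulLog ‖M i j‖ by
    simpa [Real.negMulLog_eq_neg] using this
  calc ∑ k, Real.negMulLog (hM.1.eigenvalues k)
      ≤ ∑ i, Real.negMulLog (RCLike.re (M i i)) := by
        simp only [hM.1.re_apply_self_eq_mulVec_eigenvalues]
        exact Real.concaveOn_negMulLog.sum_map_le_sum_map_mulVec
          (map_norm_sq_mem_doublyStochastic hM.1.eigenvectorUnitary.2) hM.eigenvalues_nonneg
    _ = ∑ i, Real.negMulLog ‖M i i‖ := by simp only [hM.norm_apply_self]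
    _ ≤ ∑ i, ∑ j, Real.negMulLog ‖M i j‖ := sum_le_sum fun i _ =>
        single_le_sum (fun j _ => Real.negMulLog_nonneg (norm_nonneg _) (hentry_le_one i j))
          (mem_univ i)
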